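/- Suppose U is connected, and suppose Ŝ(Y,Z) = a·g(Y,Z) + b·η(Y)η(Z) for all vector fields Y, Z, where a, b : U → ℝ are smooth functions, ξ is a smooth vector field with g(ξ,ξ) = 1, and η = g(·,ξ). If (U,∇̄) is ∇̄-Ricci symmetric, i.e. (∇̄_X Ŝ)(Y,Z) = 0 for all vector fields X, Y, Z, then a + b is a constant function on U. -/

import Mathlib

open scoped BigOperators

/-! Setup: an open set `U ⊆ ℝⁿ` with a Riemannian metric given by component functions
`g x i j`, the Levi-Civita connection computed from the Christoffel symbols, the
semi-symmetric metric connection `∇̄_X Y = ∇_X Y + π(Y)X − g(X,Y)P`, curvature and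
Ricci tensors of a connection, and covariant derivatives of `(0,2)`-tensors. -/

/-- A vector field on (an open subset of) `ℝⁿ`. -/
abbrev VF (n : ℕ) := (Fin n → ℝ) → Fin n → ℝ

/-- Partial derivative `∂ᵢ f` of a real-valued function. -/
noncomputable def pd {n : ℕ} (i : Fin n) (f : (Fin n → ℝ) → ℝ) (x : Fin n → ℝ) : ℝ :=
  fderiv ℝ f x (Pi.single i 1)

/-- The metric evaluated on two tangent vectors at the point `x`. -/
def gval {n : ℕ} (g : (Fin n → ℝ) → Fin n → Fin n → ℝ) (x v w : Fin n → ℝ) : ℝ :=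
  ∑ i, ∑ j, g x i j * v i * w j

/-- The Christoffel symbols `Γ^k_{ij} = ½ g^{kl}(∂ᵢ g_{jl} + ∂ⱼ g_{il} − ∂_l g_{ij})`. -/
noncomputable def christoffel {n : ℕ} (g : (Fin n → ℝ) → Fin n → Fin n → ℝ)
    (x : Fin n → ℝ) (k i j : Fin n) : ℝ :=
  (1 / 2) * ∑ l, (Matrix.of (g x))⁻¹ k l *
    (pd i (fun y => g y j l) x + pd j (fun y => g y i l) x - pd l (fun y => g y i j) x)

/-- The Levi-Civita covariant derivative `(∇_X Y)^k = X^i ∂ᵢ Y^k + Γ^k_{ij} X^i Y^j`. -/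
noncomputable def lcCov {n : ℕ} (g : (Fin n → ℝ) → Fin n → Fin n → ℝ)
    (X Y : VF n) (x : Fin n → ℝ) : Fin n → ℝ :=
  fun k => fderiv ℝ (fun y => Y y k) x (X x) +
    ∑ i, ∑ j, christoffel g x k i j * X x i * Y x j

/-- The semi-symmetric metric connection `∇̄_X Y = ∇_X Y + π(Y)X − g(X,Y)P`,
where `π(X) = g(X,P)`. -/
noncomputable def ssCov {n : ℕ} (g : (Fin n → ℝ) → Fin n → Fin n → ℝ)
    (P : VF n) (X Y : VF n) (x : Fin n → ℝ) : Fin n → ℝ :=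
  fun k => lcCov g X Y x k + gval g x (Y x) (P x) * X x k - gval g x (X x) (Y x) * P x k

/-- The Lie bracket of vector fields. -/
noncomputable def lie {n : ℕ} (X Y : VF n) (x : Fin n → ℝ) : Fin n → ℝ :=
  fun k => fderiv ℝ (fun y => Y y k) x (X x) - fderiv ℝ (fun y => X y k) x (Y x)

/-- The curvature `R_D(X,Y)Z = D_X D_Y Z − D_Y D_X Z − D_{[X,Y]}Z` of a connection `D`. -/
noncomputable def curv {n : ℕ} (D : VF n → VF n → VF n) (X Y Z : VF n)
    (x : Fin n → ℝ) : Fin n → ℝ :=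
  fun k => D X (D Y Z) x k - D Y (D X Z) x k - D (lie X Y) Z x k

/-- The Ricci tensor `Ric_D(Y,Z) = trace (X ↦ R_D(X,Y)Z)` of a connection `D`
(the trace computed in the coordinate frame). -/
noncomputable def ricci {n : ℕ} (D : VF n → VF n → VF n) (Y Z : VF n)
    (x : Fin n → ℝ) : ℝ :=
  ∑ i, curv D (fun _ => Pi.single i 1) Y Z x i

/-- The symmetrization `Ŝ(Y,Z) = ½(S̄(Y,Z) + S̄(Z,Y))` of the Ricci tensor of the
semi-symmetric metric connection. -/
noncomputable def shat {n : ℕ} (g : (Fin n → ℝ) → Fin n → Fin n → ℝ)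
    (P : VF n) (Y Z : VF n) (x : Fin n → ℝ) : ℝ :=
  (ricci (ssCov g P) Y Z x + ricci (ssCov g P) Z Y x) / 2

/-- The covariant derivative `(D_X T)(Y,Z) = X(T(Y,Z)) − T(D_X Y, Z) − T(Y, D_X Z)` of a
`(0,2)`-tensor `T` along the connection `D`. -/
noncomputable def covT {n : ℕ} (D : VF n → VF n → VF n)
    (T : VF n → VF n → (Fin n → ℝ) → ℝ) (X Y Z : VF n) (x : Fin n → ℝ) : ℝ :=
  fderiv ℝ (T Y Z) x (X x) - T (D X Y) Z x - T Y (D X Z) x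

/-- Smoothness of a vector-field/metric-type map on `U`. -/
def SmoothVF {n : ℕ} {E : Type*} [NormedAddCommGroup E] [NormedSpace ℝ E]
    (U : Set (Fin n → ℝ)) (f : (Fin n → ℝ) → E) : Prop :=
  ContDiffOn ℝ (⊤ : ℕ∞) f U


section Aux

variable {n : ℕ} {U : Set (Fin n → ℝ)}

theorem contDiffOn_prod_aux {ι : Type*} (s : Finset ι) (f : ι → (Fin n → ℝ) → ℝ)
    (h : ∀ i ∈ s, ContDiffOn ℝ (⊤ : ℕ∞) (f i) U) :
    ContDiffOn ℝ (⊤ : ℕ∞) (fun x => ∏ i ∈ s, f i x) U := by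
  classical
  induction s using Finset.induction with
  | empty => simpa using contDiffOn_const
  | insert _ _ hne ih =>
    rename_i a s
    simp only [Finset.prod_insert hne]
    exact (h a (Finset.mem_insert_self a s)).mul (ih fun i hi => h i (Finset.mem_insert_of_mem hi))

theorem contDiffOn_det_aux {M : (Fin n → ℝ) → Matrix (Fin n) (Fin n) ℝ}
    (hM : ∀ i j, ContDiffOn ℝ (⊤ : ℕ∞) (fun x => M x i j) U) :
    ContDiffOn ℝ (⊤ : ℕ∞) (fun x => (M x).det) U := by
  simp only [Matrix.det_apply']
  refine ContDiffOn.sum fun σ _ => ?_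
  exact ContDiffOn.mul contDiffOn_const (contDiffOn_prod_aux Finset.univ _ fun i _ => hM (σ i) i)

theorem contDiffOn_inv_entry {M : (Fin n → ℝ) → Matrix (Fin n) (Fin n) ℝ}
    (hM : ∀ i j, ContDiffOn ℝ (⊤ : ℕ∞) (fun x => M x i j) U)
    (hdet : ∀ x ∈ U, (M x).det ≠ 0) (k l : Fin n) :
    ContDiffOn ℝ (⊤ : ℕ∞) (fun x => (M x)⁻¹ k l) U := by
  have : ∀ x, (M x)⁻¹ k l = ((M x).det)⁻¹ * (M x).adjugate k l := by
    intro x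
    rw [Matrix.inv_def, Matrix.smul_apply, Ring.inverse_eq_inv', smul_eq_mul]
  simp only [this, Matrix.adjugate_apply]
  refine ContDiffOn.mul ((contDiffOn_det_aux hM).inv hdet) (contDiffOn_det_aux ?_)
  intro i j
  simp only [Matrix.updateRow_apply]
  by_cases h : i = l
  · simpa [h] using contDiffOn_const
  · simpa [h] using hM i j

theorem pd_smooth (hU : IsOpen U) {f : (Fin n → ℝ) → ℝ} (hf : ContDiffOn ℝ (⊤ : ℕ∞) f U) (i : Fin n) :
    ContDiffOn ℝ (⊤ : ℕ∞) (fun x => pd i f x) U := by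
  have h := hf.fderiv_of_isOpen hU (m := (⊤ : ℕ∞)) (by simp)
  exact h.clm_apply contDiffOn_const

theorem entry_smooth {g : (Fin n → ℝ) → Fin n → Fin n → ℝ} (hg : SmoothVF U g) (i j : Fin n) :
    ContDiffOn ℝ (⊤ : ℕ∞) (fun x => g x i j) U :=
  contDiffOn_pi.1 (contDiffOn_pi.1 hg i) j

theorem vf_entry_smooth {X : VF n} (hX : SmoothVF U X) (i : Fin n) :
    ContDiffOn ℝ (⊤ : ℕ∞) (fun x => X x i) U := contDiffOn_pi.1 hX i

theorem christoffel_smooth (hU : IsOpen U) {g : (Fin n → ℝ) → Fin n → Fin n → ℝ}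
    (hg : SmoothVF U g) (hdet : ∀ x ∈ U, (Matrix.of (g x)).det ≠ 0) (k i j : Fin n) :
    ContDiffOn ℝ (⊤ : ℕ∞) (fun x => christoffel g x k i j) U := by
  unfold christoffel
  refine ContDiffOn.mul contDiffOn_const (ContDiffOn.sum fun l _ => ContDiffOn.mul ?_ ?_)
  · exact contDiffOn_inv_entry (fun i j => entry_smooth hg i j) hdet k l
  · exact ((pd_smooth hU (entry_smooth hg j l) i).add (pd_smooth hU (entry_smooth hg i l) j)).sub
      (pd_smooth hU (entry_smooth hg i j) l)

theorem gval_smooth (hU : IsOpen U) {g : (Fin n → ℝ) → Fin n → Fin n → ℝ}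
    (hg : SmoothVF U g) {Y Z : VF n} (hY : SmoothVF U Y) (hZ : SmoothVF U Z) :
    ContDiffOn ℝ (⊤ : ℕ∞) (fun x => gval g x (Y x) (Z x)) U := by
  unfold gval
  exact ContDiffOn.sum fun i _ => ContDiffOn.sum fun j _ =>
    ((entry_smooth hg i j).mul (vf_entry_smooth hY i)).mul (vf_entry_smooth hZ j)

theorem ssCov_smooth (hU : IsOpen U) {g : (Fin n → ℝ) → Fin n → Fin n → ℝ}
    (hg : SmoothVF U g) (hdet : ∀ x ∈ U, (Matrix.of (g x)).det ≠ 0)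
    {P X Y : VF n} (hP : SmoothVF U P) (hX : SmoothVF U X) (hY : SmoothVF U Y) :
    SmoothVF U (ssCov g P X Y) := by
  refine contDiffOn_pi.2 fun k => ?_
  unfold ssCov lcCov
  refine ContDiffOn.sub (ContDiffOn.add (ContDiffOn.add ?_ ?_) ?_) ?_
  · exact ((vf_entry_smooth hY k).fderiv_of_isOpen hU (m := (⊤ : ℕ∞)) (by simp)).clm_apply hX
  · refine ContDiffOn.sum fun i _ => ContDiffOn.sum fun j _ => ?_
    exact ((christoffel_smooth hU hg hdet k i j).mul (vf_entry_smooth hX i)).mul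
      (vf_entry_smooth hY j)
  · exact (gval_smooth hU hg hY hP).mul (vf_entry_smooth hX k)
  · exact (gval_smooth hU hg hX hY).mul (vf_entry_smooth hP k)

theorem fd_sum {ι : Type*} (s : Finset ι) (F : ι → (Fin n → ℝ) → ℝ) {x v : Fin n → ℝ}
    (hF : ∀ i ∈ s, DifferentiableAt ℝ (F i) x) :
    fderiv ℝ (fun y => ∑ i ∈ s, F i y) x v = ∑ i ∈ s, fderiv ℝ (F i) x v := by
  rw [fderiv_fun_sum hF]; simp

theorem fd_mul {u w : (Fin n → ℝ) → ℝ} {x v : Fin n → ℝ}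
    (hu : DifferentiableAt ℝ u x) (hw : DifferentiableAt ℝ w x) :
    fderiv ℝ (fun y => u y * w y) x v
      = fderiv ℝ u x v * w x + u x * fderiv ℝ w x v := by
  rw [fderiv_fun_mul hu hw]
  simp only [ContinuousLinearMap.add_apply, ContinuousLinearMap.smul_apply, smul_eq_mul]
  ring

theorem fd_mul3 {u w z : (Fin n → ℝ) → ℝ} {x v : Fin n → ℝ}
    (hu : DifferentiableAt ℝ u x) (hw : DifferentiableAt ℝ w x) (hz : DifferentiableAt ℝ z x) :
    fderiv ℝ (fun y => u y * w y * z y) x v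
      = fderiv ℝ u x v * w x * z x + u x * fderiv ℝ w x v * z x
        + u x * w x * fderiv ℝ z x v := by
  rw [fd_mul (u := fun y => u y * w y) (hu.mul hw) hz, fd_mul hu hw]
  ring

theorem fd_apply_basis {f : (Fin n → ℝ) → ℝ} {x : Fin n → ℝ} (v : Fin n → ℝ) :
    fderiv ℝ f x v = ∑ i, v i * pd i f x := by
  unfold pd
  conv_lhs => rw [pi_eq_sum_univ v]
  rw [map_sum]
  refine Finset.sum_congr rfl fun i _ => ?_
  rw [map_smul, smul_eq_mul]
  congr 1
  congr 1
  ext j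
  simp [Pi.single_apply, eq_comm]

theorem ginv_contract {g : (Fin n → ℝ) → Fin n → Fin n → ℝ} {x : Fin n → ℝ}
    (hpos : (Matrix.of (g x)).PosDef) (j l : Fin n) :
    ∑ k, g x k j * (Matrix.of (g x))⁻¹ k l = if l = j then 1 else 0 := by
  set A := Matrix.of (g x) with hA
  have hdet : IsUnit A.det := isUnit_iff_ne_zero.2 hpos.det_pos.ne'
  have hsym : A.transpose = A := by
    have h := hpos.1
    ext i j; have h' := congrFun (congrFun h i) j; simpa [Matrix.conjTranspose_apply] using h'
  have h1 : A⁻¹ * A = 1 := Matrix.nonsing_inv_mul A hdet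
  have hinvsym : ∀ k l', A⁻¹ k l' = A⁻¹ l' k := by
    intro k l'
    conv_lhs => rw [show A⁻¹ k l' = (A⁻¹).transpose l' k from rfl, Matrix.transpose_nonsing_inv,
      hsym]
  calc ∑ k, g x k j * A⁻¹ k l = ∑ k, A⁻¹ l k * A k j := by
        refine Finset.sum_congr rfl fun k _ => ?_
        rw [hinvsym k l]; rw [mul_comm]; rfl
    _ = (A⁻¹ * A) l j := (Matrix.mul_apply).symm
    _ = (1 : Matrix (Fin n) (Fin n) ℝ) l j := by rw [h1]
    _ = if l = j then 1 else 0 := Matrix.one_apply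

theorem christoffel_lower {g : (Fin n → ℝ) → Fin n → Fin n → ℝ} {x : Fin n → ℝ}
    (hpos : (Matrix.of (g x)).PosDef) (i m j : Fin n) :
    ∑ k, g x k j * christoffel g x k i m
      = (1/2) * (pd i (fun y => g y m j) x + pd m (fun y => g y i j) x
          - pd j (fun y => g y i m) x) := by
  set c : Fin n → ℝ := fun l => pd i (fun y => g y m l) x + pd m (fun y => g y i l) x
    - pd l (fun y => g y i m) x with hc
  calc ∑ k, g x k j * christoffel g x k i m
      = ∑ k, ∑ l, ((1/2) * c l) * (g x k j * (Matrix.of (g x))⁻¹ k l) := by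
        refine Finset.sum_congr rfl fun k _ => ?_
        unfold christoffel
        rw [Finset.mul_sum, Finset.mul_sum]
        exact Finset.sum_congr rfl fun l _ => by ring
    _ = ∑ l, ∑ k, ((1/2) * c l) * (g x k j * (Matrix.of (g x))⁻¹ k l) := Finset.sum_comm
    _ = ∑ l, ((1/2) * c l) * (if l = j then 1 else 0) := by
        refine Finset.sum_congr rfl fun l _ => ?_
        rw [← Finset.mul_sum, ginv_contract hpos j l]
    _ = ∑ l, (if l = j then (1/2) * c l else 0) := by
        refine Finset.sum_congr rfl fun l _ => ?_
        rw [mul_ite, mul_one, mul_zero]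
    _ = (1/2) * c j := by rw [Finset.sum_ite_eq' Finset.univ j]; simp


theorem gval_symm {g : (Fin n → ℝ) → Fin n → Fin n → ℝ} {x : Fin n → ℝ}
    (hpos : (Matrix.of (g x)).PosDef) (p q : Fin n → ℝ) :
    gval g x p q = gval g x q p := by
  have hsymx : ∀ i j, g x i j = g x j i := by
    intro i j
    have h := congrFun (congrFun hpos.1 i) j
    simpa [Matrix.conjTranspose_apply] using h.symm
  unfold gval
  rw [Finset.sum_comm]
  exact Finset.sum_congr rfl fun i _ => Finset.sum_congr rfl fun j _ => by
    rw [hsymx j i]; ring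

theorem key_orth (hU : IsOpen U) {g : (Fin n → ℝ) → Fin n → Fin n → ℝ}
    (hg : SmoothVF U g) {x : Fin n → ℝ} (hx : x ∈ U)
    (hpos : (Matrix.of (g x)).PosDef)
    (P X ξ : VF n) (hξ : SmoothVF U ξ) :
    2 * gval g x (ssCov g P X ξ x) (ξ x)
      = fderiv ℝ (fun y => gval g y (ξ y) (ξ y)) x (X x) := by
  classical
  have hgd : ∀ i j, DifferentiableAt ℝ (fun y => g y i j) x := fun i j =>
    ((entry_smooth hg i j).differentiableOn (by simp)).differentiableAt (hU.mem_nhds hx)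
  have hξd : ∀ k, DifferentiableAt ℝ (fun y => ξ y k) x := fun k =>
    ((vf_entry_smooth hξ k).differentiableOn (by simp)).differentiableAt (hU.mem_nhds hx)
  have hsymx : ∀ i j, g x i j = g x j i := by
    intro i j
    have h := congrFun (congrFun hpos.1 i) j
    simpa [Matrix.conjTranspose_apply] using h.symm
  -- the right-hand side expanded
  have hRHS : fderiv ℝ (fun y => gval g y (ξ y) (ξ y)) x (X x)
      = ∑ i, ∑ j, (fderiv ℝ (fun y => g y i j) x (X x) * ξ x i * ξ x j
          + g x i j * fderiv ℝ (fun y => ξ y i) x (X x) * ξ x j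
          + g x i j * ξ x i * fderiv ℝ (fun y => ξ y j) x (X x)) := by
    have e1 : (fun y => gval g y (ξ y) (ξ y))
        = fun y => ∑ i, ∑ j, g y i j * ξ y i * ξ y j := rfl
    rw [e1, fd_sum _ (fun i y => ∑ j, g y i j * ξ y i * ξ y j) (fun i _ => DifferentiableAt.fun_sum fun j _ =>
      ((hgd i j).mul (hξd i)).mul (hξd j))]
    refine Finset.sum_congr rfl fun i _ => ?_
    rw [fd_sum _ (fun j y => g y i j * ξ y i * ξ y j) (fun j _ => ((hgd i j).mul (hξd i)).mul (hξd j))]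
    exact Finset.sum_congr rfl fun j _ => fd_mul3 (hgd i j) (hξd i) (hξd j)
  -- the left-hand side split into three pieces
  have hsplit : gval g x (ssCov g P X ξ x) (ξ x)
      = (∑ k, ∑ j, g x k j * fderiv ℝ (fun y => ξ y k) x (X x) * ξ x j)
        + (∑ k, ∑ j, g x k j * ξ x j * (∑ i, ∑ m, christoffel g x k i m * X x i * ξ x m))
        + (∑ k, ∑ j, (gval g x (ξ x) (P x) * (g x k j * X x k * ξ x j)
            - gval g x (X x) (ξ x) * (g x k j * P x k * ξ x j))) := by
    conv_lhs => rw [show gval g x (ssCov g P X ξ x) (ξ x)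
      = ∑ k, ∑ j, g x k j * ssCov g P X ξ x k * ξ x j from rfl]
    unfold ssCov lcCov
    simp only [← Finset.sum_add_distrib]
    exact Finset.sum_congr rfl fun k _ => Finset.sum_congr rfl fun j _ => by ring
  -- the semi-symmetric piece vanishes
  have hC : (∑ k, ∑ j, (gval g x (ξ x) (P x) * (g x k j * X x k * ξ x j)
      - gval g x (X x) (ξ x) * (g x k j * P x k * ξ x j))) = 0 := by
    have e : (∑ k, ∑ j, (gval g x (ξ x) (P x) * (g x k j * X x k * ξ x j)
        - gval g x (X x) (ξ x) * (g x k j * P x k * ξ x j)))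
        = gval g x (ξ x) (P x) * gval g x (X x) (ξ x)
          - gval g x (X x) (ξ x) * gval g x (P x) (ξ x) := by
      simp only [Finset.sum_sub_distrib, ← Finset.mul_sum]
      rfl
    rw [e, gval_symm hpos (ξ x) (P x), gval_symm hpos (P x) (ξ x)]
    ring
  -- the Christoffel piece
  have hB : (∑ k, ∑ j, g x k j * ξ x j * (∑ i, ∑ m, christoffel g x k i m * X x i * ξ x m))
      = (1/2) * ∑ j, ∑ m, (ξ x m * ξ x j) * fderiv ℝ (fun y => g y m j) x (X x) := by
    have step1 : (∑ k, ∑ j, g x k j * ξ x j *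
          (∑ i, ∑ m, christoffel g x k i m * X x i * ξ x m))
        = ∑ j, ∑ i, ∑ m, (X x i * ξ x m * ξ x j) * (∑ k, g x k j * christoffel g x k i m) := by
      calc (∑ k, ∑ j, g x k j * ξ x j * (∑ i, ∑ m, christoffel g x k i m * X x i * ξ x m))
          = ∑ k, ∑ j, ∑ i, ∑ m, (X x i * ξ x m * ξ x j) * (g x k j * christoffel g x k i m) := by
            refine Finset.sum_congr rfl fun k _ => Finset.sum_congr rfl fun j _ => ?_
            rw [Finset.mul_sum]
            refine Finset.sum_congr rfl fun i _ => ?_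
            rw [Finset.mul_sum]
            exact Finset.sum_congr rfl fun m _ => by ring
        _ = ∑ j, ∑ k, ∑ i, ∑ m, (X x i * ξ x m * ξ x j) * (g x k j * christoffel g x k i m) :=
            Finset.sum_comm
        _ = ∑ j, ∑ i, ∑ k, ∑ m, (X x i * ξ x m * ξ x j) * (g x k j * christoffel g x k i m) :=
            Finset.sum_congr rfl fun j _ => Finset.sum_comm
        _ = ∑ j, ∑ i, ∑ m, ∑ k, (X x i * ξ x m * ξ x j) * (g x k j * christoffel g x k i m) :=
            Finset.sum_congr rfl fun j _ => Finset.sum_congr rfl fun i _ => Finset.sum_comm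
        _ = ∑ j, ∑ i, ∑ m, (X x i * ξ x m * ξ x j) * (∑ k, g x k j * christoffel g x k i m) := by
            refine Finset.sum_congr rfl fun j _ => Finset.sum_congr rfl fun i _ =>
              Finset.sum_congr rfl fun m _ => ?_
            rw [← Finset.mul_sum]
    rw [step1]
    have step2 : ∀ j i m : Fin n, (X x i * ξ x m * ξ x j) * (∑ k, g x k j * christoffel g x k i m)
        = (1/2) * (X x i * ξ x m * ξ x j * pd i (fun y => g y m j) x)
          + (1/2) * (X x i * ξ x m * ξ x j * pd m (fun y => g y i j) x)
          - (1/2) * (X x i * ξ x m * ξ x j * pd j (fun y => g y i m) x) := by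
      intro j i m
      rw [christoffel_lower hpos i m j]
      ring
    simp only [step2]
    simp only [Finset.sum_sub_distrib, Finset.sum_add_distrib]
    -- the two last pieces cancel
    have hcancel : (∑ j, ∑ i, ∑ m, (1/2) * (X x i * ξ x m * ξ x j * pd m (fun y => g y i j) x))
        = ∑ j, ∑ i, ∑ m, (1/2) * (X x i * ξ x m * ξ x j * pd j (fun y => g y i m) x) := by
      calc (∑ j, ∑ i, ∑ m, (1/2) * (X x i * ξ x m * ξ x j * pd m (fun y => g y i j) x))
          = ∑ j, ∑ m, ∑ i, (1/2) * (X x i * ξ x m * ξ x j * pd m (fun y => g y i j) x) :=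
            Finset.sum_congr rfl fun j _ => Finset.sum_comm
        _ = ∑ m, ∑ j, ∑ i, (1/2) * (X x i * ξ x m * ξ x j * pd m (fun y => g y i j) x) :=
            Finset.sum_comm
        _ = ∑ j, ∑ i, ∑ m, (1/2) * (X x i * ξ x m * ξ x j * pd j (fun y => g y i m) x) := by
            refine Finset.sum_congr rfl fun p _ => ?_
            rw [Finset.sum_comm]
            exact Finset.sum_congr rfl fun i _ => Finset.sum_congr rfl fun q _ => by ring
    rw [hcancel]
    have hS1 : (∑ j, ∑ i, ∑ m, (1/2) * (X x i * ξ x m * ξ x j * pd i (fun y => g y m j) x))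
        = (1/2) * ∑ j, ∑ m, (ξ x m * ξ x j) * fderiv ℝ (fun y => g y m j) x (X x) := by
      rw [Finset.mul_sum]
      refine Finset.sum_congr rfl fun j _ => ?_
      rw [Finset.sum_comm, Finset.mul_sum]
      refine Finset.sum_congr rfl fun m _ => ?_
      rw [fd_apply_basis (X x), Finset.mul_sum, Finset.mul_sum]
      exact Finset.sum_congr rfl fun i _ => by ring
    rw [hS1]
    ring
  rw [hsplit, hB, hC, hRHS]
  simp only [Finset.sum_add_distrib]
  have hA2 : (∑ i, ∑ j, g x i j * ξ x i * fderiv ℝ (fun y => ξ y j) x (X x))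
      = ∑ k, ∑ j, g x k j * fderiv ℝ (fun y => ξ y k) x (X x) * ξ x j := by
    rw [Finset.sum_comm]
    exact Finset.sum_congr rfl fun k _ => Finset.sum_congr rfl fun j _ => by
      rw [hsymx j k]; ring
  have hA1 : (∑ i, ∑ j, fderiv ℝ (fun y => g y i j) x (X x) * ξ x i * ξ x j)
      = ∑ j, ∑ m, (ξ x m * ξ x j) * fderiv ℝ (fun y => g y m j) x (X x) := by
    rw [Finset.sum_comm]
    exact Finset.sum_congr rfl fun j _ => Finset.sum_congr rfl fun m _ => by ring
  rw [hA2, ← hA1]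
  ring

end Aux

/-- On a connected open `U ⊆ ℝⁿ` (`n ≥ 3`) with Riemannian metric `g`,
vector field `P`, semi-symmetric metric connection `∇̄`, `S̄ = Ric_∇̄`, `Ŝ = sym S̄`:
suppose `Ŝ(Y,Z) = a·g(Y,Z) + b·η(Y)η(Z)` for all vector fields `Y, Z`, where `a, b` are
smooth functions on `U`, `ξ` is a smooth unit vector field, and `η = g(·,ξ)`.  If `(U,∇̄)`
is `∇̄`-Ricci symmetric, i.e. `(∇̄_X Ŝ)(Y,Z) = 0` for all vector fields `X, Y, Z`, then
`a + b` is a constant function on `U`. -/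
theorem statement10 (n : ℕ) (hn : 3 ≤ n)
    (U : Set (Fin n → ℝ)) (hU : IsOpen U) (hUconn : IsConnected U)
    (g : (Fin n → ℝ) → Fin n → Fin n → ℝ) (hg : SmoothVF U g)
    (hgpos : ∀ x ∈ U, (Matrix.of (g x)).PosDef)
    (P : VF n) (hP : SmoothVF U P)
    (a b : (Fin n → ℝ) → ℝ) (ha : SmoothVF U a) (hb : SmoothVF U b)
    (ξ : VF n) (hξ : SmoothVF U ξ)
    (hξunit : ∀ x ∈ U, gval g x (ξ x) (ξ x) = 1)
    (hQE : ∀ Y Z : VF n, SmoothVF U Y → SmoothVF U Z → ∀ x ∈ U,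
      shat g P Y Z x =
        a x * gval g x (Y x) (Z x)
          + b x * (gval g x (Y x) (ξ x) * gval g x (Z x) (ξ x)))
    (hRicciSym : ∀ X Y Z : VF n, SmoothVF U X → SmoothVF U Y → SmoothVF U Z → ∀ x ∈ U,
      covT (ssCov g P) (shat g P) X Y Z x = 0) :
    ∃ c : ℝ, ∀ x ∈ U, a x + b x = c := by
  classical
  have hdet : ∀ x ∈ U, (Matrix.of (g x)).det ≠ 0 := fun x hx => (hgpos x hx).det_pos.ne'
  -- ∇̄_X ξ is orthogonal to ξ
  have hOrth : ∀ (X : VF n), ∀ x ∈ U, gval g x (ssCov g P X ξ x) (ξ x) = 0 := by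
    intro X x hx
    have h2 := key_orth hU hg hx (hgpos x hx) P X ξ hξ
    have hconst : fderiv ℝ (fun y => gval g y (ξ y) (ξ y)) x (X x) = 0 := by
      have hev : (fun y => gval g y (ξ y) (ξ y)) =ᶠ[nhds x] (fun _ => (1:ℝ)) :=
        Filter.eventuallyEq_of_mem (hU.mem_nhds hx) (fun y hy => hξunit y hy)
      rw [hev.fderiv_eq]
      simp
    rw [hconst] at h2
    linarith
  -- the derivative of a+b vanishes on U
  have hderiv0 : ∀ x ∈ U, ∀ i : Fin n, fderiv ℝ (fun y => a y + b y) x (Pi.single i 1) = 0 := by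
    intro x hx i
    set X : VF n := fun _ => Pi.single i 1 with hX
    have hXs : SmoothVF U X := contDiffOn_const
    have hWs : SmoothVF U (ssCov g P X ξ) := ssCov_smooth hU hg hdet hP hXs hξ
    have hcov := hRicciSym X ξ ξ hXs hξ hξ x hx
    unfold covT at hcov
    have hW0 : gval g x (ssCov g P X ξ x) (ξ x) = 0 := hOrth X x hx
    have hW0' : gval g x (ξ x) (ssCov g P X ξ x) = 0 :=
      (gval_symm (hgpos x hx) _ _).trans hW0
    have h1 : shat g P (ssCov g P X ξ) ξ x = 0 := by
      rw [hQE (ssCov g P X ξ) ξ hWs hξ x hx, hW0]; ring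
    have h2 : shat g P ξ (ssCov g P X ξ) x = 0 := by
      rw [hQE ξ (ssCov g P X ξ) hξ hWs x hx, hW0', hW0]; ring
    have hfd : fderiv ℝ (shat g P ξ ξ) x = fderiv ℝ (fun y => a y + b y) x := by
      apply Filter.EventuallyEq.fderiv_eq
      refine Filter.eventuallyEq_of_mem (hU.mem_nhds hx) (fun y hy => ?_)
      rw [hQE ξ ξ hξ hξ y hy, hξunit y hy]
      ring
    rw [hfd, h1, h2] at hcov
    simpa using hcov
  have hfd0 : ∀ x ∈ U, fderiv ℝ (fun y => a y + b y) x = 0 := by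
    intro x hx
    apply ContinuousLinearMap.ext
    intro v
    rw [fd_apply_basis v]
    simp only [ContinuousLinearMap.zero_apply]
    refine Finset.sum_eq_zero fun i _ => ?_
    unfold pd
    rw [hderiv0 x hx i, mul_zero]
  -- local constancy
  have hdiffOn : DifferentiableOn ℝ (fun y => a y + b y) U :=
    ((ha.add hb).differentiableOn (by simp))
  have hloc : ∀ x ∈ U, ∀ᶠ y in nhds x, a y + b y = a x + b x := by
    intro x hx
    obtain ⟨ε, hε, hball⟩ := Metric.isOpen_iff.1 hU x hx
    filter_upwards [Metric.ball_mem_nhds x hε] with y hy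
    refine Convex.is_const_of_fderivWithin_eq_zero (convex_ball x ε)
      (hdiffOn.mono hball) (fun z hz => ?_) hy (Metric.mem_ball_self hε)
    rw [fderivWithin_of_isOpen Metric.isOpen_ball hz]
    exact hfd0 z (hball hz)
  -- globalize by connectedness
  obtain ⟨x₀, hx₀⟩ := hUconn.nonempty
  refine ⟨a x₀ + b x₀, ?_⟩
  by_contra hcon
  push_neg at hcon
  obtain ⟨x₁, hx₁, hne⟩ := hcon
  set S : Set (Fin n → ℝ) := {y | ∀ᶠ z in nhds y, a z + b z = a x₀ + b x₀} with hS
  set T : Set (Fin n → ℝ) := {y ∈ U | a y + b y ≠ a x₀ + b x₀} with hT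
  have hSopen : IsOpen S := by
    rw [isOpen_iff_mem_nhds]
    intro y hy
    exact hy.eventually_nhds.mono fun z hz => hz
  have hTopen : IsOpen T := by
    rw [isOpen_iff_mem_nhds]
    intro y hy
    filter_upwards [hloc y hy.1, hU.mem_nhds hy.1] with z hz hzU
    exact ⟨hzU, by rw [hz]; exact hy.2⟩
  have hsub : U ⊆ S ∪ T := by
    intro y hy
    by_cases h : a y + b y = a x₀ + b x₀
    · left
      filter_upwards [hloc y hy] with z hz
      rw [hz, h]
    · right
      exact ⟨hy, h⟩
  have h1 : (U ∩ S).Nonempty := ⟨x₀, hx₀, by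
    filter_upwards [hloc x₀ hx₀] with z hz using hz⟩
  have h2 : (U ∩ T).Nonempty := ⟨x₁, hx₁, hx₁, hne⟩
  obtain ⟨y, hyU, hyS, hyT⟩ := hUconn.isPreconnected S T hSopen hTopen hsub h1 h2
  exact hyT.2 hyS.self_of_nhds
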